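/- Let α ≥ 1 and β ≥ 0 be real numbers. Then the tilted Bell expression satisfies I_α^β ≤ β + 2α + 2αM₁ + M₂, where M₁ and M₂ are the measurement-dependence parameters. -/

import Mathlib

open MeasureTheory

/-- A density on a measure space: measurable, a.e. nonnegative, integrable, integral one. -/
def IsDensity {Λ : Type*} [MeasurableSpace Λ] (μ : Measure Λ) (p : Λ → ℝ) : Prop :=
  Measurable p ∧ (∀ᵐ l ∂μ, 0 ≤ p l) ∧ Integrable p μ ∧ ∫ l, p l ∂μ = 1

/-- A deterministic ±1-valued measurable outcome function. -/
def IsSign {Λ : Type*} [MeasurableSpace Λ] (A : Λ → ℝ) : Prop :=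
  Measurable A ∧ ∀ l, A l = 1 ∨ A l = -1

section Aux

variable {Λ : Type*} [MeasurableSpace Λ] {μ : Measure Λ}

lemma isSign_abs {A : Λ → ℝ} (hA : IsSign A) (l : Λ) : |A l| = 1 := by
  rcases hA.2 l with h | h <;> simp [h]

lemma integrable_mul_bdd {p f : Λ → ℝ} (hp : Integrable p μ)
    (hf : Measurable f) (C : ℝ) (hbd : ∀ l, |f l| ≤ C) :
    Integrable (fun l => p l * f l) μ := by
  have h := hp.bdd_mul (c := C) hf.aestronglyMeasurable (Filter.Eventually.of_forall fun l => by simpa using hbd l)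
  simpa [mul_comm] using h

lemma integral_shift {p q f : Λ → ℝ} (hp : Integrable p μ) (hq : Integrable q μ)
    (hf : Measurable f) (hbd : ∀ l, |f l| ≤ 1) :
    ∫ l, p l * f l ∂μ ≤ ∫ l, q l * f l ∂μ + ∫ l, |p l - q l| ∂μ := by
  have hpf := integrable_mul_bdd hp hf 1 hbd
  have hqf := integrable_mul_bdd hq hf 1 hbd
  have habs : Integrable (fun l => |p l - q l|) μ := (hp.sub hq).abs
  have key : ∫ l, (p l - q l) * f l ∂μ ≤ ∫ l, |p l - q l| ∂μ := by
    apply integral_mono (integrable_mul_bdd (hp.sub hq) hf 1 hbd) habs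
    intro l
    calc (p l - q l) * f l ≤ |(p l - q l) * f l| := le_abs_self _
      _ = |p l - q l| * |f l| := abs_mul _ _
      _ ≤ |p l - q l| * 1 := mul_le_mul_of_nonneg_left (hbd l) (abs_nonneg _)
      _ = |p l - q l| := mul_one _
  have h2 : (fun l => (p l - q l) * f l) = fun l => p l * f l - q l * f l := by
    funext l; ring
  rw [h2, integral_sub hpf hqf] at key
  linarith

lemma key_pointwise (a s1 s2 s3 s4 t u : ℝ) (ha : 1 ≤ a) (ht : 0 ≤ t) (hu : 0 ≤ u)
    (hs1 : s1 = 1 ∨ s1 = -1) (hs2 : s2 = 1 ∨ s2 = -1)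
    (hs3 : s3 = 1 ∨ s3 = -1) (hs4 : s4 = 1 ∨ s4 = -1) :
    t * ((a * s1 + s2) * s3) + u * ((a * s1 - s2) * s4) ≤ a * t + a * u + |t - u| := by
  rcases abs_cases (t - u) with ⟨h, _⟩ | ⟨h, _⟩ <;>
    rcases hs1 with rfl | rfl <;> rcases hs2 with rfl | rfl <;>
    rcases hs3 with rfl | rfl <;> rcases hs4 with rfl | rfl <;>
    rw [h] <;>
    nlinarith [mul_nonneg ht (by linarith : (0:ℝ) ≤ a - 1),
      mul_nonneg hu (by linarith : (0:ℝ) ≤ a - 1),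
      mul_nonneg ht (by linarith : (0:ℝ) ≤ a + 1),
      mul_nonneg hu (by linarith : (0:ℝ) ≤ a + 1)]

end Aux

theorem tilted_bell_MDL_bound_two
    {Λ : Type*} [MeasurableSpace Λ] (μ : Measure Λ) [SigmaFinite μ]
    (α β : ℝ) (hα : 1 ≤ α) (hβ : 0 ≤ β)
    (p1 p11 p12 p21 p22 : Λ → ℝ)
    (hp1 : IsDensity μ p1) (hp11 : IsDensity μ p11) (hp12 : IsDensity μ p12)
    (hp21 : IsDensity μ p21) (hp22 : IsDensity μ p22)
    (A1 A2 B1 B2 : Λ → ℝ)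
    (hA1 : IsSign (Λ := Λ) A1) (hA2 : IsSign (Λ := Λ) A2)
    (hB1 : IsSign (Λ := Λ) B1) (hB2 : IsSign (Λ := Λ) B2)
    (M1 M2 : ℝ)
    (hM1 : M1 = max (∫ l, |p11 l - p21 l| ∂μ) (∫ l, |p12 l - p22 l| ∂μ))
    (hM2 : M2 = max (∫ l, |p11 l - p12 l| ∂μ) (∫ l, |p21 l - p22 l| ∂μ)) :
    β * ∫ l, p1 l * A1 l ∂μ
      + α * ∫ l, p11 l * A1 l * B1 l ∂μ
      + α * ∫ l, p12 l * A1 l * B2 l ∂μ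
      + ∫ l, p21 l * A2 l * B1 l ∂μ
      - ∫ l, p22 l * A2 l * B2 l ∂μ
      ≤ β + 2 * α + 2 * α * M1 + M2 := by
  have hα0 : (0:ℝ) ≤ α := by linarith
  obtain ⟨mp1, pos1, int1, one1⟩ := hp1
  obtain ⟨mp11, pos11, int11, one11⟩ := hp11
  obtain ⟨mp12, pos12, int12, one12⟩ := hp12
  obtain ⟨mp21, pos21, int21, one21⟩ := hp21
  obtain ⟨mp22, pos22, int22, one22⟩ := hp22
  -- measurability and bounds of sign products
  have mA1B1 : Measurable (fun l => A1 l * B1 l) := hA1.1.mul hB1.1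
  have mA1B2 : Measurable (fun l => A1 l * B2 l) := hA1.1.mul hB2.1
  have mA2B1 : Measurable (fun l => A2 l * B1 l) := hA2.1.mul hB1.1
  have mA2B2 : Measurable (fun l => A2 l * B2 l) := hA2.1.mul hB2.1
  have bdA1B1 : ∀ l, |A1 l * B1 l| ≤ 1 := fun l => by
    rw [abs_mul, isSign_abs hA1, isSign_abs hB1]; norm_num
  have bdA1B2 : ∀ l, |A1 l * B2 l| ≤ 1 := fun l => by
    rw [abs_mul, isSign_abs hA1, isSign_abs hB2]; norm_num
  have bdA2B1 : ∀ l, |A2 l * B1 l| ≤ 1 := fun l => by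
    rw [abs_mul, isSign_abs hA2, isSign_abs hB1]; norm_num
  have bdA2B2 : ∀ l, |A2 l * B2 l| ≤ 1 := fun l => by
    rw [abs_mul, isSign_abs hA2, isSign_abs hB2]; norm_num
  have bdA1 : ∀ l, |A1 l| ≤ 1 := fun l => le_of_eq (isSign_abs hA1 l)
  -- reassociate products in the goal
  simp only [mul_assoc]
  -- first term
  have hfirst : ∫ l, p1 l * A1 l ∂μ ≤ 1 := by
    rw [← one1]
    apply integral_mono_ae (integrable_mul_bdd int1 hA1.1 1 bdA1) int1
    filter_upwards [pos1] with l hl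
    have : A1 l ≤ 1 := by rcases hA1.2 l with h | h <;> rw [h] <;> norm_num
    nlinarith
  -- shifts in the x setting
  have h11 : ∫ l, p11 l * (A1 l * B1 l) ∂μ
      ≤ ∫ l, p21 l * (A1 l * B1 l) ∂μ + ∫ l, |p11 l - p21 l| ∂μ :=
    integral_shift int11 int21 mA1B1 bdA1B1
  have h12 : ∫ l, p12 l * (A1 l * B2 l) ∂μ
      ≤ ∫ l, p22 l * (A1 l * B2 l) ∂μ + ∫ l, |p12 l - p22 l| ∂μ :=
    integral_shift int12 int22 mA1B2 bdA1B2
  have hM1a : ∫ l, |p11 l - p21 l| ∂μ ≤ M1 := hM1 ▸ le_max_left _ _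
  have hM1b : ∫ l, |p12 l - p22 l| ∂μ ≤ M1 := hM1 ▸ le_max_right _ _
  have hM2b : ∫ l, |p21 l - p22 l| ∂μ ≤ M2 := hM2 ▸ le_max_right _ _
  -- the CHSH-type core
  have mG1 : Measurable (fun l => (α * A1 l + A2 l) * B1 l) :=
    ((measurable_const.mul hA1.1).add hA2.1).mul hB1.1
  have mG2 : Measurable (fun l => (α * A1 l - A2 l) * B2 l) :=
    ((measurable_const.mul hA1.1).sub hA2.1).mul hB2.1
  have bdG1 : ∀ l, |(α * A1 l + A2 l) * B1 l| ≤ α + 1 := fun l => by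
    rw [abs_mul, isSign_abs hB1, mul_one]
    calc |α * A1 l + A2 l| ≤ |α * A1 l| + |A2 l| := abs_add_le _ _
      _ = |α| * |A1 l| + |A2 l| := by rw [abs_mul]
      _ = α + 1 := by rw [isSign_abs hA1, isSign_abs hA2, abs_of_nonneg hα0]; ring
  have bdG2 : ∀ l, |(α * A1 l - A2 l) * B2 l| ≤ α + 1 := fun l => by
    rw [abs_mul, isSign_abs hB2, mul_one]
    calc |α * A1 l - A2 l| ≤ |α * A1 l| + |A2 l| := abs_sub _ _
      _ = |α| * |A1 l| + |A2 l| := by rw [abs_mul]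
      _ = α + 1 := by rw [isSign_abs hA1, isSign_abs hA2, abs_of_nonneg hα0]; ring
  have hF1 : Integrable (fun l => p21 l * ((α * A1 l + A2 l) * B1 l)) μ :=
    integrable_mul_bdd int21 mG1 (α + 1) bdG1
  have hF2 : Integrable (fun l => p22 l * ((α * A1 l - A2 l) * B2 l)) μ :=
    integrable_mul_bdd int22 mG2 (α + 1) bdG2
  have i21b1 := integrable_mul_bdd int21 mA1B1 1 bdA1B1
  have i21b2 := integrable_mul_bdd int21 mA2B1 1 bdA2B1
  have i22b1 := integrable_mul_bdd int22 mA1B2 1 bdA1B2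
  have i22b2 := integrable_mul_bdd int22 mA2B2 1 bdA2B2
  have e1 : ∫ l, p21 l * ((α * A1 l + A2 l) * B1 l) ∂μ
      = α * ∫ l, p21 l * (A1 l * B1 l) ∂μ + ∫ l, p21 l * (A2 l * B1 l) ∂μ := by
    have heq : (fun l => p21 l * ((α * A1 l + A2 l) * B1 l))
        = fun l => α * (p21 l * (A1 l * B1 l)) + p21 l * (A2 l * B1 l) := by
      funext l; ring
    rw [heq, integral_add (i21b1.const_mul α) i21b2, integral_const_mul]
  have e2 : ∫ l, p22 l * ((α * A1 l - A2 l) * B2 l) ∂μ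
      = α * ∫ l, p22 l * (A1 l * B2 l) ∂μ - ∫ l, p22 l * (A2 l * B2 l) ∂μ := by
    have heq : (fun l => p22 l * ((α * A1 l - A2 l) * B2 l))
        = fun l => α * (p22 l * (A1 l * B2 l)) - p22 l * (A2 l * B2 l) := by
      funext l; ring
    rw [heq, integral_sub (i22b1.const_mul α) i22b2, integral_const_mul]
  have hR : Integrable (fun l => α * p21 l + α * p22 l + |p21 l - p22 l|) μ :=
    ((int21.const_mul α).add (int22.const_mul α)).add (int21.sub int22).abs
  have hcore : ∫ l, p21 l * ((α * A1 l + A2 l) * B1 l) ∂μ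
      + ∫ l, p22 l * ((α * A1 l - A2 l) * B2 l) ∂μ
      ≤ 2 * α + ∫ l, |p21 l - p22 l| ∂μ := by
    have hsum : ∫ l, (p21 l * ((α * A1 l + A2 l) * B1 l)
        + p22 l * ((α * A1 l - A2 l) * B2 l)) ∂μ
        ≤ ∫ l, (α * p21 l + α * p22 l + |p21 l - p22 l|) ∂μ := by
      apply integral_mono_ae (hF1.add hF2) hR
      filter_upwards [pos21, pos22] with l h21 h22
      exact key_pointwise α (A1 l) (A2 l) (B1 l) (B2 l) (p21 l) (p22 l) hα h21 h22
        (hA1.2 l) (hA2.2 l) (hB1.2 l) (hB2.2 l)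
    rw [integral_add hF1 hF2] at hsum
    have habs : Integrable (fun l => |p21 l - p22 l|) μ := (int21.sub int22).abs
    have e3 : ∫ l, (α * p21 l + α * p22 l + |p21 l - p22 l|) ∂μ
        = 2 * α + ∫ l, |p21 l - p22 l| ∂μ := by
      have hq : Integrable (fun l => α * p21 l + α * p22 l) μ :=
        (int21.const_mul α).add (int22.const_mul α)
      rw [integral_add hq habs,
        integral_add (int21.const_mul α) (int22.const_mul α),
        integral_const_mul, integral_const_mul, one21, one22]
      ring
    rw [e3] at hsum
    linarith
  -- assemble
  have hβ1 : β * ∫ l, p1 l * A1 l ∂μ ≤ β := by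
    calc β * ∫ l, p1 l * A1 l ∂μ ≤ β * 1 := mul_le_mul_of_nonneg_left hfirst hβ
      _ = β := mul_one _
  have h11' : α * ∫ l, p11 l * (A1 l * B1 l) ∂μ
      ≤ α * ∫ l, p21 l * (A1 l * B1 l) ∂μ + α * M1 := by
    have : ∫ l, p11 l * (A1 l * B1 l) ∂μ ≤ ∫ l, p21 l * (A1 l * B1 l) ∂μ + M1 := by
      linarith
    nlinarith
  have h12' : α * ∫ l, p12 l * (A1 l * B2 l) ∂μ
      ≤ α * ∫ l, p22 l * (A1 l * B2 l) ∂μ + α * M1 := by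
    have : ∫ l, p12 l * (A1 l * B2 l) ∂μ ≤ ∫ l, p22 l * (A1 l * B2 l) ∂μ + M1 := by
      linarith
    nlinarith
  rw [e1, e2] at hcore
  linarith
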